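/- Let n, m, p ∈ ℕ, constants r > 0, ι > 0, and bounds ν, η, ρ_v, ρ_a ≥ 0; let α : ℝ → ℝ be locally Lipschitz, nondecreasing, with α(0) = 0. Suppose ζ : ℝ → ℝⁿ is twice differentiable on [0,∞) and there are functions F, D, b, G, w₁, w₂ : ℝ → ℝⁿ, Y, Ẏ : ℝ → (ℝᵖ → ℝⁿ linear), θ̂ : ℝ → ℝᵖ, ξ̂ : ℝ → ℝ and constants θ ∈ ℝᵖ, ξ ∈ ℝ such that for all t ≥ 0: ζ'(t) = F(t) + Y(t)θ − w₁(t), ζ''(t) = D(t) + Ẏ(t)θ + ξ·b(t) + G(t) − w₂(t), ‖θ − θ̂(t)‖ ≤ ν, |ξ − ξ̂(t)| ≤ η, ‖w₁(t)‖ ≤ ρ_v, ‖w₂(t)‖ ≤ ρ_a, and 2⟪ζ(t), D(t)⟫ + 2⟪ζ(t), Ẏ(t)θ̂(t)⟫ − 2‖Ẏ(t)*ζ(t)‖·ν − 2‖ζ(t)‖·ρ_a + 2ξ̂(t)·⟪ζ(t), b(t)⟫ − 2|⟪ζ(t), b(t)⟫|·η + 2⟪ζ(t), G(t)⟫ + ι·(2⟪ζ(t),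 F(t)⟫ + 2⟪ζ(t), Y(t)θ̂(t)⟫ − 2‖Y(t)*ζ(t)‖·ν − 2‖ζ(t)‖·ρ_v) + α(2⟪ζ(t), ζ'(t)⟫ + ι·(‖ζ(t)‖² − r²)) ≥ 0. If ‖ζ(0)‖² − r² ≥ 0 and 2⟪ζ(0), ζ'(0)⟫ + ι·(‖ζ(0)‖² − r²) ≥ 0, then ‖ζ(t)‖ ≥ r for all t ≥ 0. -/

import Mathlib

open scoped RealInnerProductSpace
open Filter Topology

/-!
With `h = ‖ζ‖² - r²` and `ψ = ḣ + ι h`, the estimates `‖θ - θ̂‖ ≤ ν`, `|ξ - ξ̂| ≤ η`,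
`‖w₁‖ ≤ ρ_v`, `‖w₂‖ ≤ ρ_a` (Cauchy–Schwarz, after moving `Y` and `Ẏ` to the adjoint side) show
that the robust admissibility condition is a lower bound for `ψ̇ + α(ψ)`, so `ψ̇ + α(ψ) ≥ 0`.
Where `ψ < 0`, monotonicity and `α 0 = 0` give `α(ψ) ≤ 0`, hence `ψ̇ ≥ 0`, so `ψ` cannot leave
`[0, ∞)`; then `ḣ ≥ -ι h`, and the same barrier argument keeps `h ≥ 0`.
-/

theorem nonneg_of_hasDerivAt_of_nonneg_deriv_where_neg {φ φ' : ℝ → ℝ} {a : ℝ}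
    (hφ : ∀ t ≥ a, HasDerivAt φ (φ' t) t) (hφ' : ∀ t ≥ a, φ t < 0 → 0 ≤ φ' t)
    (ha : 0 ≤ φ a) : ∀ t ≥ a, 0 ≤ φ t := by
  intro t ht
  -- `-φ` can touch the increasing barrier `ε (x - a + 1) > 0` only where `φ < 0`.
  have fence : ∀ ε > 0, -φ t ≤ ε * (t - a + 1) := by
    intro ε hε
    refine image_le_of_deriv_right_lt_deriv_boundary (f := fun x => -φ x)
      (B := fun x => ε * (x - a + 1))
      (fun x hx => (hφ x hx.1).continuousAt.neg.continuousWithinAt)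
      (fun x hx => (hφ x hx.1).neg.hasDerivWithinAt) (by linarith)
      (fun x => (((hasDerivAt_id x).sub_const a).add_const 1).const_mul ε) ?_ ⟨ht, le_rfl⟩
    intro x hx hx_eq
    have hneg : φ x < 0 := by nlinarith [hx.1]
    simpa using (neg_nonpos.2 (hφ' x hx.1 hneg)).trans_lt hε
  have hlim : Tendsto (fun ε : ℝ => ε * (t - a + 1)) (𝓝[>] 0) (𝓝 0) :=
    tendsto_nhdsWithin_of_tendsto_nhds
      (by simpa using (tendsto_id (x := 𝓝 (0:ℝ))).mul_const (t - a + 1))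
  exact neg_nonpos.1 (ge_of_tendsto hlim (eventually_nhdsWithin_of_forall fence))

theorem nonneg_of_hocbf {h h' ψ' α : ℝ → ℝ} {ι a : ℝ} (hι : 0 ≤ ι) (hα : Monotone α)
    (hα0 : α 0 = 0) (hh : ∀ t ≥ a, HasDerivAt h (h' t) t)
    (hψ : ∀ t ≥ a, HasDerivAt (fun s => h' s + ι * h s) (ψ' t) t)
    (hcbf : ∀ t ≥ a, 0 ≤ ψ' t + α (h' t + ι * h t))
    (ha : 0 ≤ h a) (ha' : 0 ≤ h' a + ι * h a) : ∀ t ≥ a, 0 ≤ h t := by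
  have hψ_nonneg : ∀ t ≥ a, 0 ≤ h' t + ι * h t := by
    refine nonneg_of_hasDerivAt_of_nonneg_deriv_where_neg hψ (fun t ht hneg => ?_) ha'
    linarith [hcbf t ht, hα hneg.le]
  refine nonneg_of_hasDerivAt_of_nonneg_deriv_where_neg hh (fun t ht hneg => ?_) ha
  nlinarith [hψ_nonneg t ht]

section

variable {E P : Type*} [NormedAddCommGroup E] [InnerProductSpace ℝ E] [CompleteSpace E]
  [NormedAddCommGroup P] [InnerProductSpace ℝ P] [CompleteSpace P]

theorem inner_apply_ge_of_norm_sub_le (z : E) (A : P →L[ℝ] E) {θ θ' : P} {ν : ℝ}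
    (hθ : ‖θ - θ'‖ ≤ ν) :
    ⟪z, A θ'⟫ - ‖ContinuousLinearMap.adjoint A z‖ * ν ≤ ⟪z, A θ⟫ := calc
  _ ≤ ⟪z, A θ'⟫ - ‖ContinuousLinearMap.adjoint A z‖ * ‖θ - θ'‖ := by gcongr
  _ ≤ ⟪z, A θ'⟫ + ⟪ContinuousLinearMap.adjoint A z, θ - θ'⟫ := by
    linarith [neg_le_of_abs_le (abs_real_inner_le_norm (ContinuousLinearMap.adjoint A z) (θ - θ'))]
  _ = ⟪z, A θ⟫ := by
    rw [ContinuousLinearMap.adjoint_inner_left, map_sub, inner_sub_right, add_sub_cancel]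

theorem inner_add_apply_sub_ge_of_norm_le (z c w : E) (A : P →L[ℝ] E) {θ θ' : P} {ν ρ : ℝ}
    (hθ : ‖θ - θ'‖ ≤ ν) (hw : ‖w‖ ≤ ρ) :
    ⟪z, c⟫ + ⟪z, A θ'⟫ - ‖ContinuousLinearMap.adjoint A z‖ * ν - ‖z‖ * ρ
      ≤ ⟪z, c + A θ - w⟫ := by
  have hzw : ⟪z, w⟫ ≤ ‖z‖ * ρ := (real_inner_le_norm z w).trans (by gcongr)
  rw [inner_sub_right, inner_add_right]
  linarith [inner_apply_ge_of_norm_sub_le z A hθ]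

end

theorem mul_ge_of_abs_sub_le (c : ℝ) {ξ ξ' η : ℝ} (hξ : |ξ - ξ'| ≤ η) :
    ξ' * c - |c| * η ≤ ξ * c := by
  have : |(ξ - ξ') * c| ≤ η * |c| := by rw [abs_mul]; gcongr
  linarith [neg_le_of_abs_le this]

theorem collision_avoidance_forward_invariance_general (n p : ℕ)
    (r ι ν η ρv ρa : ℝ)
    (hι : ι > 0)
    (α : ℝ → ℝ) (hα_mono : Monotone α) (hα0 : α 0 = 0)
    (ζ dζ : ℝ → EuclideanSpace ℝ (Fin n))
    (F D b G w₁ w₂ : ℝ → EuclideanSpace ℝ (Fin n))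
    (Y Ydot : ℝ → (EuclideanSpace ℝ (Fin p) →L[ℝ] EuclideanSpace ℝ (Fin n)))
    (θhat : ℝ → EuclideanSpace ℝ (Fin p)) (ξhat : ℝ → ℝ)
    (θ : EuclideanSpace ℝ (Fin p)) (ξ : ℝ)
    (hζ' : ∀ t ≥ (0:ℝ), HasDerivAt ζ (dζ t) t)
    (hζ'eq : ∀ t ≥ (0:ℝ), dζ t = F t + Y t θ - w₁ t)
    (hζ'' : ∀ t ≥ (0:ℝ), HasDerivAt dζ (D t + Ydot t θ + ξ • b t + G t - w₂ t) t)
    (hθ : ∀ t ≥ (0:ℝ), ‖θ - θhat t‖ ≤ ν)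
    (hξ : ∀ t ≥ (0:ℝ), |ξ - ξhat t| ≤ η)
    (hw₁ : ∀ t ≥ (0:ℝ), ‖w₁ t‖ ≤ ρv)
    (hw₂ : ∀ t ≥ (0:ℝ), ‖w₂ t‖ ≤ ρa)
    (hadm : ∀ t ≥ (0:ℝ),
      2 * ⟪ζ t, D t⟫ + 2 * ⟪ζ t, Ydot t (θhat t)⟫
        - 2 * ‖(ContinuousLinearMap.adjoint (Ydot t)) (ζ t)‖ * ν - 2 * ‖ζ t‖ * ρa
        + 2 * ξhat t * ⟪ζ t, b t⟫ - 2 * |⟪ζ t, b t⟫| * η + 2 * ⟪ζ t, G t⟫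
        + ι * (2 * ⟪ζ t, F t⟫ + 2 * ⟪ζ t, Y t (θhat t)⟫
          - 2 * ‖(ContinuousLinearMap.adjoint (Y t)) (ζ t)‖ * ν - 2 * ‖ζ t‖ * ρv)
        + α (2 * ⟪ζ t, dζ t⟫ + ι * (‖ζ t‖ ^ 2 - r ^ 2)) ≥ 0)
    (h0 : ‖ζ 0‖ ^ 2 - r ^ 2 ≥ 0)
    (h0' : 2 * ⟪ζ 0, dζ 0⟫ + ι * (‖ζ 0‖ ^ 2 - r ^ 2) ≥ 0) :
    ∀ t ≥ (0:ℝ), ‖ζ t‖ ≥ r := by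
  have hh : ∀ t ≥ (0:ℝ), HasDerivAt (fun s => ‖ζ s‖ ^ 2 - r ^ 2) (2 * ⟪ζ t, dζ t⟫) t :=
    fun t ht => (hζ' t ht).norm_sq.sub_const _
  have hψ : ∀ t ≥ (0:ℝ), HasDerivAt (fun s => 2 * ⟪ζ s, dζ s⟫ + ι * (‖ζ s‖ ^ 2 - r ^ 2))
      (2 * (⟪ζ t, D t + Ydot t θ + ξ • b t + G t - w₂ t⟫ + ⟪dζ t, dζ t⟫)
        + ι * (2 * ⟪ζ t, dζ t⟫)) t :=
    fun t ht => (((hζ' t ht).inner ℝ (hζ'' t ht)).const_mul 2).add ((hh t ht).const_mul ι)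
  have hcbf : ∀ t ≥ (0:ℝ), 0 ≤ 2 * (⟪ζ t, D t + Ydot t θ + ξ • b t + G t - w₂ t⟫
      + ⟪dζ t, dζ t⟫) + ι * (2 * ⟪ζ t, dζ t⟫)
      + α (2 * ⟪ζ t, dζ t⟫ + ι * (‖ζ t‖ ^ 2 - r ^ 2)) := by
    intro t ht
    have hacc := inner_add_apply_sub_ge_of_norm_le (ζ t) (D t + ξ • b t + G t) (w₂ t) (Ydot t)
      (hθ t ht) (hw₂ t ht)
    have hvel := inner_add_apply_sub_ge_of_norm_le (ζ t) (F t) (w₁ t) (Y t) (hθ t ht) (hw₁ t ht)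
    rw [← hζ'eq t ht] at hvel
    rw [show D t + Ydot t θ + ξ • b t + G t = D t + ξ • b t + G t + Ydot t θ by abel]
    simp only [inner_add_right, real_inner_smul_right] at hacc
    linarith [hadm t ht, mul_ge_of_abs_sub_le ⟪ζ t, b t⟫ (hξ t ht),
      mul_le_mul_of_nonneg_left hvel hι.le, real_inner_self_nonneg (x := dζ t)]
  intro t ht
  have hsq := nonneg_of_hocbf hι.le hα_mono hα0 hh hψ hcbf h0 h0' t ht
  exact (le_abs_self r).trans (abs_le_of_sq_le_sq (by linarith) (norm_nonneg _))

/-- Collision-avoidance CBF lemma (Lemma 3): with `ζ` the pursuer–obstacle relative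
position and `h = ‖ζ‖² - r²` the relative-degree-2 CBF, if the robust admissibility
condition holds for all `t ≥ 0` and `h(0) ≥ 0`, `ḣ(0) + ι·h(0) ≥ 0`, then
`‖ζ(t)‖ ≥ r` for all `t ≥ 0`. -/
theorem collision_avoidance_forward_invariance (n m p : ℕ)
    (r ι ν η ρv ρa : ℝ)
    (hr : r > 0) (hι : ι > 0)
    (hν : 0 ≤ ν) (hη : 0 ≤ η) (hρv : 0 ≤ ρv) (hρa : 0 ≤ ρa)
    (α : ℝ → ℝ) (hα_lip : LocallyLipschitz α) (hα_mono : Monotone α) (hα0 : α 0 = 0)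
    (ζ dζ : ℝ → EuclideanSpace ℝ (Fin n))
    (F D b G w₁ w₂ : ℝ → EuclideanSpace ℝ (Fin n))
    (Y Ydot : ℝ → (EuclideanSpace ℝ (Fin p) →L[ℝ] EuclideanSpace ℝ (Fin n)))
    (θhat : ℝ → EuclideanSpace ℝ (Fin p)) (ξhat : ℝ → ℝ)
    (θ : EuclideanSpace ℝ (Fin p)) (ξ : ℝ)
    (hζ' : ∀ t ≥ (0:ℝ), HasDerivAt ζ (dζ t) t)
    (hζ'eq : ∀ t ≥ (0:ℝ), dζ t = F t + Y t θ - w₁ t)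
    (hζ'' : ∀ t ≥ (0:ℝ), HasDerivAt dζ (D t + Ydot t θ + ξ • b t + G t - w₂ t) t)
    (hθ : ∀ t ≥ (0:ℝ), ‖θ - θhat t‖ ≤ ν)
    (hξ : ∀ t ≥ (0:ℝ), |ξ - ξhat t| ≤ η)
    (hw₁ : ∀ t ≥ (0:ℝ), ‖w₁ t‖ ≤ ρv)
    (hw₂ : ∀ t ≥ (0:ℝ), ‖w₂ t‖ ≤ ρa)
    (hadm : ∀ t ≥ (0:ℝ),
      2 * ⟪ζ t, D t⟫ + 2 * ⟪ζ t, Ydot t (θhat t)⟫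
        - 2 * ‖(ContinuousLinearMap.adjoint (Ydot t)) (ζ t)‖ * ν - 2 * ‖ζ t‖ * ρa
        + 2 * ξhat t * ⟪ζ t, b t⟫ - 2 * |⟪ζ t, b t⟫| * η + 2 * ⟪ζ t, G t⟫
        + ι * (2 * ⟪ζ t, F t⟫ + 2 * ⟪ζ t, Y t (θhat t)⟫
          - 2 * ‖(ContinuousLinearMap.adjoint (Y t)) (ζ t)‖ * ν - 2 * ‖ζ t‖ * ρv)
        + α (2 * ⟪ζ t, dζ t⟫ + ι * (‖ζ t‖ ^ 2 - r ^ 2)) ≥ 0)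
    (h0 : ‖ζ 0‖ ^ 2 - r ^ 2 ≥ 0)
    (h0' : 2 * ⟪ζ 0, dζ 0⟫ + ι * (‖ζ 0‖ ^ 2 - r ^ 2) ≥ 0) :
    ∀ t ≥ (0:ℝ), ‖ζ t‖ ≥ r :=
  collision_avoidance_forward_invariance_general n p r ι ν η ρv ρa hι α hα_mono hα0 ζ dζ F D b G w₁
    w₂ Y Ydot θhat ξhat θ ξ hζ' hζ'eq hζ'' hθ hξ hw₁ hw₂ hadm h0 h0'
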